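/- arXiv:2603.20922 — 2 statements merged into one kernel-verified Lean document; each statement's English description precedes it below -/
import Mathlib

section
/- The constant function 1 together with all functions φ_{B,B'} = 1_{B'}/m(B') − 1_B/m(B), taken over all pairs (B, B') in which B is a ball of X with at least two elements and B' is a nonempty ball with B' ⊊ B such that d(x,y) = diam(B) for every x ∈ B' and every y ∈ B \ B', linearly span the space of all functions X → ℝ. -/
open scoped Classical
open Finset

/-- Closed ball of radius `r` around `x`, as a finset. -/
noncomputable def uball {X : Type*} [Fintype X] (d : X → X → ℝ) (x : X) (r : ℝ) : Finset X :=
  Finset.univ.filter fun y => d x y ≤ r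

/-- A ball of the ultrametric space: a closed ball of nonnegative radius. -/
def IsBall {X : Type*} [Fintype X] (d : X → X → ℝ) (B : Finset X) : Prop :=
  ∃ x r, 0 ≤ r ∧ B = uball d x r

/-- Diameter of a finite set: maximum of `d` over `B × B` (`0` if `B` is empty). -/
noncomputable def fdiam {X : Type*} [Fintype X] (d : X → X → ℝ) (B : Finset X) : ℝ :=
  if h : (B ×ˢ B).Nonempty then (B ×ˢ B).sup' h fun p => d p.1 p.2 else 0

/-- Mass of a set: `m(B) = Σ_{x ∈ B} m(x)`. -/
noncomputable def mass {X : Type*} [Fintype X] (m : X → ℝ) (B : Finset X) : ℝ :=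
  ∑ x ∈ B, m x

/-- The eigenvalue attached to a ball `B`, computed from a base point `x₀ ∈ B`:
`λ(B) = −(Σ_{y ∉ B} k(d(x₀,y))·m(y) + k(diam B)·m(B))`. -/
noncomputable def lamB {X : Type*} [Fintype X] [DecidableEq X]
    (d : X → X → ℝ) (k : ℝ → ℝ) (m : X → ℝ) (B : Finset X) (x₀ : X) : ℝ :=
  -((∑ y ∈ Bᶜ, k (d x₀ y) * m y) + k (fdiam d B) * mass m B)

/-- The parent radius of a ball `B ⊊ X` seen from `x ∈ B`: `r⁺ = min{d(x,y) : y ∉ B}`. -/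
noncomputable def parentR {X : Type*} [Fintype X] [DecidableEq X]
    (d : X → X → ℝ) (B : Finset X) (x : X) : ℝ :=
  if h : (Bᶜ : Finset X).Nonempty then Bᶜ.inf' h fun y => d x y else 0

/-- The parent ball `B⁺ = B(x, r⁺)` of `B ⊊ X`, computed from a base point `x ∈ B`. -/
noncomputable def parentB {X : Type*} [Fintype X] [DecidableEq X]
    (d : X → X → ℝ) (B : Finset X) (x : X) : Finset X :=
  uball d x (parentR d B x)

/-- The ultrametric Laplacian matrix:
`L x y = k(d(x,y))·m(y)` off the diagonal and `L x x = −Σ_{z ≠ x} k(d(x,z))·m(z)`. -/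
noncomputable def ultraLap {X : Type*} [Fintype X] [DecidableEq X]
    (d : X → X → ℝ) (k : ℝ → ℝ) (m : X → ℝ) : Matrix X X ℝ :=
  fun x y => if y = x then -(∑ z ∈ ({x}ᶜ : Finset X), k (d x z) * m z) else k (d x y) * m y

/-- The smallest ball containing `x` and `y` and having at least two elements:
`B(x, d(x,y))` for `x ≠ y`, and `B(x, min_{z ≠ x} d(x,z))` for `x = y`. -/
noncomputable def sball {X : Type*} [Fintype X] [DecidableEq X]
    (d : X → X → ℝ) (x y : X) : Finset X :=
  if x = y then
    (if h : (({x}ᶜ : Finset X)).Nonempty then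
      uball d x ((({x}ᶜ : Finset X)).inf' h fun z => d x z)
     else uball d x 0)
  else uball d x (d x y)

/-!
Every nonempty ball `B ≠ X` has a parent ball `B⁺ = B(x, r⁺)`, where `r⁺` is the distance from
`x ∈ B` to the nearest point outside `B`. By the ultrametric inequality every point of `B` is at
distance exactly `r⁺ = diam B⁺` from every point of `B⁺ \ B`, so `(B⁺, B)` is an admissible pair and
`1_B = m(B) (φ_{B⁺,B} + 1_{B⁺} / m(B⁺))`. Going up the chain of parents until `B⁺ = X`, where
`1_X` is the constant function, puts the indicator of every nonempty ball in the span; singletons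
are balls, so their indicators span all functions.
-/

section Ultrametric

variable {X : Type*}

structure IsUltrametric (d : X → X → ℝ) : Prop where
  eq_zero_iff : ∀ x y, d x y = 0 ↔ x = y
  symm : ∀ x y, d x y = d y x
  le_max : ∀ x y z, d x z ≤ max (d x y) (d y z)

namespace IsUltrametric

variable {d : X → X → ℝ}

theorem nonneg (hd : IsUltrametric d) (x y : X) : 0 ≤ d x y := by
  have h := hd.le_max x y x
  rwa [(hd.eq_zero_iff x x).2 rfl, hd.symm y x, max_self] at h

theorem dist_eq_of_lt (hd : IsUltrametric d) {x a y : X} (h : d x a < d x y) :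
    d a y = d x y := by
  refine le_antisymm ?_ ?_
  · simpa [hd.symm a x, h.le] using hd.le_max a x y
  · simpa [h.not_ge] using hd.le_max x a y

end IsUltrametric

section Balls

variable [Fintype X] {d : X → X → ℝ}

@[simp]
theorem mem_uball {x y : X} {r : ℝ} : y ∈ uball d x r ↔ d x y ≤ r := by
  simp [uball]

theorem uball_mono {x : X} {r s : ℝ} (h : r ≤ s) : uball d x r ⊆ uball d x s :=
  fun _ hy => (mem_uball.1 hy).trans h |> mem_uball.2

theorem uball_zero (hd : IsUltrametric d) (x : X) : uball d x 0 = {x} := by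
  ext y
  rw [mem_uball, mem_singleton, eq_comm, ← hd.eq_zero_iff]
  exact ⟨fun h => le_antisymm h (hd.nonneg x y), le_of_eq⟩

theorem uball_eq_of_mem (hd : IsUltrametric d) {c x : X} {r : ℝ} (hx : x ∈ uball d c r) :
    uball d c r = uball d x r := by
  rw [mem_uball] at hx
  ext y
  simp only [mem_uball]
  constructor
  · exact fun h => (hd.le_max x c y).trans (max_le (hd.symm x c ▸ hx) h)
  · exact fun h => (hd.le_max c x y).trans (max_le hx h)

theorem fdiam_uball_of_dist_eq (hd : IsUltrametric d) {x z : X} {r : ℝ} (hz : d x z = r) :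
    fdiam d (uball d x r) = r := by
  have hr : 0 ≤ r := hz ▸ hd.nonneg x z
  have hx : x ∈ uball d x r := mem_uball.2 (((hd.eq_zero_iff x x).2 rfl).le.trans hr)
  have hz' : z ∈ uball d x r := mem_uball.2 hz.le
  rw [fdiam, dif_pos ⟨(x, x), mem_product.2 ⟨hx, hx⟩⟩]
  refine le_antisymm (sup'_le _ _ fun p hp => ?_) ?_
  · obtain ⟨h₁, h₂⟩ := mem_product.1 hp
    exact (hd.le_max p.1 x p.2).trans
      (max_le (hd.symm p.1 x ▸ mem_uball.1 h₁) (mem_uball.1 h₂))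
  · calc r = d x z := hz.symm
      _ ≤ _ := le_sup' (f := fun p : X × X => d p.1 p.2) (b := (x, z))
        (mem_product.2 ⟨hx, hz'⟩)

theorem isBall_singleton (hd : IsUltrametric d) (x : X) : IsBall d {x} :=
  ⟨x, 0, le_rfl, (uball_zero hd x).symm⟩

theorem exists_parent_ball [DecidableEq X] (hd : IsUltrametric d) {B : Finset X} (hB : IsBall d B)
    {x : X} (hx : x ∈ B) (hBc : Bᶜ.Nonempty) :
    ∃ Bp, IsBall d Bp ∧ B ⊂ Bp ∧ ∀ a ∈ B, ∀ y ∈ Bp \ B, d a y = fdiam d Bp := by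
  obtain ⟨c, r, hr, rfl⟩ := hB
  rw [uball_eq_of_mem hd hx] at hBc ⊢
  obtain ⟨z, hzc, hz⟩ := exists_mem_eq_inf' hBc fun y => d x y
  have hz_not : z ∉ uball d x r := mem_compl.1 hzc
  have hrz : r < d x z := lt_of_not_ge (mt mem_uball.2 hz_not)
  refine ⟨uball d x (d x z), ⟨x, d x z, hr.trans hrz.le, rfl⟩,
    Finset.ssubset_iff_subset_ne.2 ⟨uball_mono hrz.le, ?_⟩, fun a ha y hy => ?_⟩
  · rintro h
    exact hz_not (h ▸ mem_uball.2 le_rfl)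
  · obtain ⟨hy, hyB⟩ := mem_sdiff.1 hy
    have hxy : d x y = d x z :=
      le_antisymm (mem_uball.1 hy) (hz ▸ inf'_le (fun y => d x y) (mem_compl.2 hyB))
    rw [fdiam_uball_of_dist_eq hd rfl,
      hd.dist_eq_of_lt ((mem_uball.1 ha).trans_lt (hrz.trans_eq hxy.symm)), hxy]

end Balls

section Span

variable [Fintype X]

def ballGenerators [DecidableEq X] (d : X → X → ℝ) (m : X → ℝ) : Set (X → ℝ) :=
  insert (fun _ => (1 : ℝ))
    {φ : X → ℝ | ∃ B B' : Finset X, IsBall d B ∧ IsBall d B' ∧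
      1 < B.card ∧ B'.Nonempty ∧ B' ⊂ B ∧
      (∀ x ∈ B', ∀ y ∈ B \ B', d x y = fdiam d B) ∧
      φ = fun x => (if x ∈ B' then (mass m B')⁻¹ else 0) -
            (if x ∈ B then (mass m B)⁻¹ else 0)}

variable {d : X → X → ℝ} {m : X → ℝ}

theorem mass_pos (hm : ∀ x, 0 < m x) {B : Finset X} (hB : B.Nonempty) : 0 < mass m B :=
  sum_pos (fun x _ => hm x) hB

theorem ite_mem_span_of_ssubset [DecidableEq X] (hm : ∀ x, 0 < m x) {B Bp : Finset X}
    (hB : IsBall d B) (hBp : IsBall d Bp) (hne : B.Nonempty) (hsub : B ⊂ Bp)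
    (hdist : ∀ a ∈ B, ∀ y ∈ Bp \ B, d a y = fdiam d Bp)
    (hBp_mem : (fun y => if y ∈ Bp then (1 : ℝ) else 0) ∈
      Submodule.span ℝ (ballGenerators d m)) :
    (fun y => if y ∈ B then (1 : ℝ) else 0) ∈ Submodule.span ℝ (ballGenerators d m) := by
  set φ : X → ℝ := fun y => (if y ∈ B then (mass m B)⁻¹ else 0) -
    (if y ∈ Bp then (mass m Bp)⁻¹ else 0)
  have hφ : φ ∈ ballGenerators d m := Set.mem_insert_of_mem _
    ⟨Bp, B, hBp, hB, lt_of_le_of_lt hne.card_pos (card_lt_card hsub), hne, hsub, hdist, rfl⟩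
  have hmB := (mass_pos hm hne).ne'
  have h_eq : (fun y => if y ∈ B then (1 : ℝ) else 0) =
      mass m B • (φ + (mass m Bp)⁻¹ • fun y => if y ∈ Bp then (1 : ℝ) else 0) := by
    funext y
    by_cases hyB : y ∈ B
    · simp [φ, hyB, hsub.subset hyB, hmB]
    · by_cases hyBp : y ∈ Bp <;> simp [φ, hyB, hyBp]
  rw [h_eq]
  exact Submodule.smul_mem _ _ (Submodule.add_mem _ (Submodule.subset_span hφ)
    (Submodule.smul_mem _ _ hBp_mem))

theorem ite_mem_span_ballGenerators [DecidableEq X] (hd : IsUltrametric d) (hm : ∀ x, 0 < m x)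
    {B : Finset X} (hB : IsBall d B) (hne : B.Nonempty) :
    (fun y => if y ∈ B then (1 : ℝ) else 0) ∈ Submodule.span ℝ (ballGenerators d m) := by
  refine Finset.strongDownwardInduction (n := Fintype.card X)
    (p := fun B => IsBall d B → B.Nonempty →
      (fun y => if y ∈ B then (1 : ℝ) else 0) ∈ Submodule.span ℝ (ballGenerators d m))
    (fun B ih _ hB hne => ?_) B (card_le_univ B) hB hne
  rcases (Bᶜ).eq_empty_or_nonempty with hBc | hBc
  · rw [compl_eq_empty_iff] at hBc
    subst hBc
    simp only [mem_univ, if_true]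
    exact Submodule.subset_span (Set.mem_insert _ _)
  · obtain ⟨x, hx⟩ := hne
    obtain ⟨Bp, hBp, hsub, hdist⟩ := exists_parent_ball hd hB hx hBc
    exact ite_mem_span_of_ssubset hm hB hBp ⟨x, hx⟩ hsub hdist
      (ih (card_le_univ Bp) hsub hBp ⟨x, hsub.subset hx⟩)

end Span

end Ultrametric

theorem stmt6_general {X : Type*} [Fintype X] [DecidableEq X]
    (d : X → X → ℝ)
    (hd0 : ∀ x y, d x y = 0 ↔ x = y)
    (hsymm : ∀ x y, d x y = d y x)
    (hultra : ∀ x y z, d x z ≤ max (d x y) (d y z))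
    (m : X → ℝ) (hm : ∀ x, 0 < m x) :
    Submodule.span ℝ
      (insert (fun _ => (1 : ℝ))
        {φ : X → ℝ | ∃ B B' : Finset X, IsBall d B ∧ IsBall d B' ∧
          1 < B.card ∧ B'.Nonempty ∧ B' ⊂ B ∧
          (∀ x ∈ B', ∀ y ∈ B \ B', d x y = fdiam d B) ∧
          φ = fun x => (if x ∈ B' then (mass m B')⁻¹ else 0) -
                (if x ∈ B then (mass m B)⁻¹ else 0)}) = ⊤ := by
  have hd : IsUltrametric d := ⟨hd0, hsymm, hultra⟩
  refine eq_top_iff.2 ((Pi.basisFun ℝ X).span_eq.ge.trans (Submodule.span_le.2 ?_))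
  rintro _ ⟨x, rfl⟩
  have hx : Pi.basisFun ℝ X x = fun y => if y ∈ ({x} : Finset X) then 1 else 0 := by
    funext y
    by_cases hy : y = x <;> simp [hy]
  rw [SetLike.mem_coe, hx]
  exact ite_mem_span_ballGenerators hd hm (isBall_singleton hd x) (singleton_nonempty x)

/-- The constant function `1` together with all functions
`φ_{B,B'} = 1_{B'}/m(B') − 1_B/m(B)` (over all balls `B` with at least two elements
and nonempty balls `B' ⊊ B` with `d(x,y) = diam B` for `x ∈ B'`, `y ∈ B \ B'`)
span the space of all functions `X → ℝ`. -/
theorem stmt6 {X : Type*} [Fintype X] [DecidableEq X]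
    (hX : 1 < Fintype.card X)
    (d : X → X → ℝ)
    (hd0 : ∀ x y, d x y = 0 ↔ x = y)
    (hsymm : ∀ x y, d x y = d y x)
    (hultra : ∀ x y z, d x z ≤ max (d x y) (d y z))
    (m : X → ℝ) (hm : ∀ x, 0 < m x) :
    Submodule.span ℝ
      (insert (fun _ => (1 : ℝ))
        {φ : X → ℝ | ∃ B B' : Finset X, IsBall d B ∧ IsBall d B' ∧
          1 < B.card ∧ B'.Nonempty ∧ B' ⊂ B ∧
          (∀ x ∈ B', ∀ y ∈ B \ B', d x y = fdiam d B) ∧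
          φ = fun x => (if x ∈ B' then (mass m B')⁻¹ else 0) -
                (if x ∈ B then (mass m B)⁻¹ else 0)}) = ⊤ :=
  stmt6_general d hd0 hsymm hultra m hm
end

section
/- Assume k is nonincreasing on [0,∞), k(diam X) > 0, and Σ_{x ∈ X} m(x) = 1. Then for every u : X → ℝ and every x ∈ X, (exp(tL) u)(x) tends to Σ_{y ∈ X} u(y)·m(y) as t → ∞; in particular, (exp(tL))_{x,y} tends to m(y) as t → ∞ for all x, y ∈ X. -/
/-!
Put `c = k(diam X)` and let `P` be the matrix all of whose rows are `m`. Since `L` has zero row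
sums and is reversible for `m`, `LP = PL = 0`, and `P` is idempotent because `Σ m = 1`. Hence
`L = Q + c(P - 1)` with `Q` commuting with `P - 1`, and as `exp(s(P - 1)) = P + e^{-s}(1 - P)`,
`exp(tL) = P + e^{-tc}(exp(tQ) - P)`. Since `k` is nonincreasing, `k(d(x,y)) ≥ c`, so `Q` has
nonnegative off-diagonal entries and zero row sums: `exp(tQ)` is a stochastic matrix for `t ≥ 0`,
hence bounded, and `exp(tL) → P` exponentially fast.
-/

open scoped Classical
open Finset

open NormedSpace Matrix Filter Topology

section ExpEigen

variable {𝔸 : Type*} [NormedRing 𝔸] [NormedAlgebra ℝ 𝔸] [CompleteSpace 𝔸]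

theorem NormedSpace.exp_mul_of_mul_eq_smul {b c : 𝔸} {r : ℝ} (h : b * c = r • c) :
    exp b * c = Real.exp r • c := by
  have hpow : ∀ n : ℕ, b ^ n * c = r ^ n • c := by
    intro n
    induction n with
    | zero => simp
    | succ n ih => rw [pow_succ', mul_assoc, ih, mul_smul_comm, h, smul_smul, pow_succ]
  have hterm : (fun n : ℕ => ((Nat.factorial n : ℝ)⁻¹ • b ^ n) * c) =
      fun n => ((Nat.factorial n : ℝ)⁻¹ • r ^ n) • c := by
    funext n
    rw [smul_mul_assoc, hpow, smul_smul, smul_eq_mul]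
  have hb := (exp_series_hasSum_exp' (𝕂 := ℝ) b).mul_right c
  rw [hterm] at hb
  rw [Real.exp_eq_exp_ℝ]
  exact hb.unique ((exp_series_hasSum_exp' (𝕂 := ℝ) r).smul_const c)

theorem IsIdempotentElem.exp_smul_sub_one {p : 𝔸} (hp : IsIdempotentElem p) (s : ℝ) :
    exp (s • (p - 1)) = p + Real.exp (-s) • (1 - p) := by
  have hker : s • (p - 1) * p = (0 : ℝ) • p := by
    rw [smul_mul_assoc, sub_mul, hp.eq, one_mul, sub_self, smul_zero, zero_smul]
  have hrange : s • (p - 1) * (1 - p) = (-s) • (1 - p) := by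
    rw [smul_mul_assoc, ← neg_sub, neg_mul, hp.one_sub.eq, neg_smul, smul_neg]
  calc exp (s • (p - 1)) = exp (s • (p - 1)) * p + exp (s • (p - 1)) * (1 - p) := by
        rw [← mul_add, add_sub_cancel, mul_one]
    _ = p + Real.exp (-s) • (1 - p) := by
        rw [exp_mul_of_mul_eq_smul hker, exp_mul_of_mul_eq_smul hrange, Real.exp_zero, one_smul]

theorem IsIdempotentElem.exp_smul_eq_of_mul_eq_zero {p l : 𝔸} (hp : IsIdempotentElem p)
    (hlp : l * p = 0) (hpl : p * l = 0) (c s : ℝ) :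
    exp (s • l) = p + Real.exp (-(s * c)) • (exp (s • (l - c • (p - 1))) - p) := by
  obtain ⟨n, hn⟩ : ∃ n, n = l - c • (p - 1) := ⟨_, rfl⟩
  have hnp : n * p = 0 := by
    rw [hn, sub_mul, hlp, smul_mul_assoc, sub_mul, hp.eq, one_mul, sub_self, smul_zero, sub_self]
  have hpn : p * n = 0 := by
    rw [hn, mul_sub, hpl, mul_smul_comm, mul_sub, hp.eq, mul_one, sub_self, smul_zero, sub_self]
  have hcomm : Commute (s • n) ((s * c) • (p - 1)) := by
    have h : Commute n (p - 1) := by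
      change n * (p - 1) = (p - 1) * n
      rw [mul_sub, sub_mul, hnp, hpn, mul_one, one_mul]
    exact (h.smul_left s).smul_right (s * c)
  have hfix : exp (s • n) * p = p := by
    have h : s • n * p = (0 : ℝ) • p := by rw [smul_mul_assoc, hnp, smul_zero, zero_smul]
    simpa using exp_mul_of_mul_eq_smul h
  -- `exp_add_of_commute` is stated for normed `ℚ`-algebras
  let +nondep : NormedAlgebra ℚ 𝔸 := .restrictScalars ℚ ℝ 𝔸
  calc exp (s • l) = exp (s • n + (s * c) • (p - 1)) := by
        rw [hn, smul_sub, smul_smul, sub_add_cancel]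
    _ = exp (s • n) * exp ((s * c) • (p - 1)) := exp_add_of_commute hcomm
    _ = p + Real.exp (-(s * c)) • (exp (s • (l - c • (p - 1))) - p) := by
        rw [hp.exp_smul_sub_one, mul_add, hfix, mul_smul_comm, mul_sub, mul_one, hfix, hn]

end ExpEigen

namespace Matrix

variable {n : Type*} [Fintype n] [DecidableEq n]

theorem exp_mulVec_of_mulVec_eq_smul {B : Matrix n n ℝ} {v : n → ℝ} {r : ℝ}
    (h : B *ᵥ v = r • v) : exp B *ᵥ v = Real.exp r • v := by
  have hmat : exp B * vecMulVec v 1 = Real.exp r • vecMulVec v 1 :=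
    open scoped Norms.Operator in
    exp_mul_of_mul_eq_smul (by rw [mul_vecMulVec, h, smul_vecMulVec])
  rw [mul_vecMulVec, ← smul_vecMulVec] at hmat
  ext i
  simpa using congrFun (congrFun hmat i) i

theorem exp_apply_nonneg_of_nonneg {N : Matrix n n ℝ} (h : ∀ i j, 0 ≤ N i j) (i j : n) :
    0 ≤ exp N i j := by
  have hpow : ∀ k : ℕ, ∀ i j, 0 ≤ (N ^ k) i j := by
    intro k
    induction k with
    | zero => intro i j; by_cases hij : i = j <;> simp [hij]
    | succ k ih =>
      intro i j
      rw [pow_succ, mul_apply]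
      exact Finset.sum_nonneg fun l _ => mul_nonneg (ih i l) (h l j)
  have hsum := open scoped Norms.Operator in exp_series_hasSum_exp' (𝕂 := ℝ) N
  exact (Pi.hasSum.mp (Pi.hasSum.mp hsum i) j).nonneg fun k =>
    mul_nonneg (by positivity) (hpow k i j)

theorem exp_apply_nonneg_of_offDiag_nonneg {N : Matrix n n ℝ}
    (h : ∀ i j, i ≠ j → 0 ≤ N i j) (i j : n) : 0 ≤ exp N i j := by
  set a := ∑ l, |N l l|
  have hshift : ∀ i j, 0 ≤ (N + a • 1) i j := by
    intro i j
    by_cases hij : i = j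
    · subst hij
      have : |N i i| ≤ a := Finset.single_le_sum (f := fun l => |N l l|)
        (fun l _ => abs_nonneg _) (Finset.mem_univ i)
      simp only [add_apply, smul_apply, one_apply_eq, smul_eq_mul, mul_one]
      linarith [neg_abs_le (N i i)]
    · simpa [one_apply_ne hij] using h i j hij
  have hscalar : exp ((-a) • (1 : Matrix n n ℝ)) * 1 = Real.exp (-a) • 1 :=
    open scoped Norms.Operator in exp_mul_of_mul_eq_smul (mul_one _)
  have hsplit : exp N = Real.exp (-a) • exp (N + a • 1) :=
    calc exp N = exp ((-a) • (1 : Matrix n n ℝ) + (N + a • 1)) := by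
          rw [neg_smul, neg_add_eq_sub, add_sub_cancel_right]
      _ = exp ((-a) • (1 : Matrix n n ℝ)) * exp (N + a • 1) :=
          exp_add_of_commute _ _ ((Commute.one_left (N + a • 1)).smul_left (-a))
      _ = Real.exp (-a) • exp (N + a • 1) := by rw [← mul_one (exp _), hscalar, smul_one_mul]
  rw [hsplit, smul_apply, smul_eq_mul]
  exact mul_nonneg (Real.exp_nonneg _) (exp_apply_nonneg_of_nonneg hshift i j)

theorem exp_mem_rowStochastic {Q : Matrix n n ℝ} (hoff : ∀ i j, i ≠ j → 0 ≤ Q i j)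
    (hrow : Q *ᵥ 1 = 0) : exp Q ∈ rowStochastic ℝ n := by
  refine ⟨exp_apply_nonneg_of_offDiag_nonneg hoff, ?_⟩
  simpa using exp_mulVec_of_mulVec_eq_smul (r := 0) (by rw [hrow, zero_smul])

variable {Q : Matrix n n ℝ} {m : n → ℝ}

theorem exp_smul_apply_eq_add (hQ : Q *ᵥ 1 = 0) (hmQ : m ᵥ* Q = 0) (hm : ∑ i, m i = 1)
    (c t : ℝ) (i j : n) :
    exp (t • Q) i j =
      m j + Real.exp (-(t * c)) * (exp (t • (Q - c • (replicateRow n m - 1))) i j - m j) := by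
  have hP : IsIdempotentElem (replicateRow n m) := by
    rw [IsIdempotentElem, ← one_vecMulVec, vecMulVec_mul_vecMulVec, dotProduct_one, hm, one_smul]
  have hQP : Q * replicateRow n m = 0 := by
    rw [← one_vecMulVec, mul_vecMulVec, hQ, zero_vecMulVec]
  have hPQ : replicateRow n m * Q = 0 := by
    rw [← one_vecMulVec, vecMulVec_mul, hmQ, vecMulVec_zero]
  have h : exp (t • Q) = replicateRow n m +
      Real.exp (-(t * c)) • (exp (t • (Q - c • (replicateRow n m - 1))) - replicateRow n m) :=
    open scoped Norms.Operator in hP.exp_smul_eq_of_mul_eq_zero hQP hPQ c t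
  simp [h]

theorem exp_smul_sub_mem_rowStochastic (hQ : Q *ᵥ 1 = 0) (hm : ∑ i, m i = 1) {c : ℝ}
    (hoff : ∀ i j, i ≠ j → c * m j ≤ Q i j) {t : ℝ} (ht : 0 ≤ t) :
    exp (t • (Q - c • (replicateRow n m - 1))) ∈ rowStochastic ℝ n := by
  apply exp_mem_rowStochastic
  · intro i j hij
    simp only [smul_apply, sub_apply, replicateRow_apply, one_apply_ne hij, sub_zero, smul_eq_mul]
    exact mul_nonneg ht (sub_nonneg.2 (hoff i j hij))
  · rw [smul_mulVec, sub_mulVec, hQ, smul_mulVec, sub_mulVec, ← one_vecMulVec, vecMulVec_mulVec,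
      one_mulVec]
    simp [dotProduct_one, hm]

theorem tendsto_exp_smul_apply (hQ : Q *ᵥ 1 = 0) (hmQ : m ᵥ* Q = 0) (hm : ∑ i, m i = 1)
    {c : ℝ} (hc : 0 < c) (hoff : ∀ i j, i ≠ j → c * m j ≤ Q i j) (i j : n) :
    Tendsto (fun t : ℝ => exp (t • Q) i j) atTop (𝓝 (m j)) := by
  have hdecay : Tendsto (fun t : ℝ => Real.exp (-(t * c))) atTop (𝓝 0) :=
    Real.tendsto_exp_neg_atTop_nhds_zero.comp (tendsto_id.atTop_mul_const hc)
  have hbdd : IsBoundedUnder (· ≤ ·) atTop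
      (norm ∘ fun t : ℝ => exp (t • (Q - c • (replicateRow n m - 1))) i j - m j) := by
    refine isBoundedUnder_of_eventually_le (a := 1 + |m j|) ?_
    filter_upwards [eventually_ge_atTop 0] with t ht
    have hE := exp_smul_sub_mem_rowStochastic hQ hm hoff ht
    have h0 := nonneg_of_mem_rowStochastic hE (i := i) (j := j)
    have h1 := le_one_of_mem_rowStochastic hE (i := i) (j := j)
    rw [Function.comp_apply, Real.norm_eq_abs, abs_le]
    constructor <;> linarith [le_abs_self (m j), neg_abs_le (m j)]
  simpa [exp_smul_apply_eq_add hQ hmQ hm c] using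
    (hdecay.zero_mul_isBoundedUnder_le hbdd).const_add (m j)

end Matrix

theorem nonneg_of_ultrametric {X : Type*} {d : X → X → ℝ} (hdiag : ∀ x, d x x = 0)
    (hsymm : ∀ x y, d x y = d y x) (hultra : ∀ x y z, d x z ≤ max (d x y) (d y z)) (x y : X) :
    0 ≤ d x y := by
  simpa [hdiag, hsymm y x] using hultra x y x

theorem le_fdiam {X : Type*} [Fintype X] (d : X → X → ℝ) {B : Finset X} {x y : X}
    (hx : x ∈ B) (hy : y ∈ B) : d x y ≤ fdiam d B := by
  have hxy : (x, y) ∈ B ×ˢ B := Finset.mem_product.2 ⟨hx, hy⟩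
  rw [fdiam, dif_pos ⟨_, hxy⟩]
  exact Finset.le_sup' (fun p : X × X => d p.1 p.2) hxy

section UltraLaplacian

variable {X : Type*} [Fintype X] [DecidableEq X]
variable (d : X → X → ℝ) (k : ℝ → ℝ) (m : X → ℝ)

theorem ultraLap_apply_of_ne {x y : X} (h : y ≠ x) : ultraLap d k m x y = k (d x y) * m y :=
  if_neg h

theorem ultraLap_mulVec_one : ultraLap d k m *ᵥ 1 = 0 := by
  ext x
  change ∑ y, ultraLap d k m x y * 1 = 0
  simp_rw [mul_one]
  rw [← Finset.sum_compl_add_sum {x}, Finset.sum_singleton,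
    Finset.sum_congr rfl fun y hy => ultraLap_apply_of_ne d k m (by simpa using hy)]
  simp [ultraLap]

theorem mul_ultraLap_apply_comm (hsymm : ∀ x y, d x y = d y x) (x y : X) :
    m x * ultraLap d k m x y = m y * ultraLap d k m y x := by
  rcases eq_or_ne x y with rfl | hxy
  · rfl
  · rw [ultraLap_apply_of_ne d k m hxy.symm, ultraLap_apply_of_ne d k m hxy, hsymm]
    ring

theorem vecMul_ultraLap_eq_zero (hsymm : ∀ x y, d x y = d y x) : m ᵥ* ultraLap d k m = 0 := by
  ext y
  have hrow := congrFun (ultraLap_mulVec_one d k m) y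
  change ∑ x, m x * ultraLap d k m x y = 0
  change ∑ x, ultraLap d k m y x * 1 = 0 at hrow
  simp_rw [mul_ultraLap_apply_comm d k m hsymm _ y, ← Finset.mul_sum]
  simp_rw [mul_one] at hrow
  rw [hrow, mul_zero]

theorem le_ultraLap_apply_of_ne (hd : ∀ x y, 0 ≤ d x y) (hm : ∀ x, 0 ≤ m x)
    (hk : ∀ a b, 0 ≤ a → a ≤ b → k b ≤ k a) {x y : X} (hxy : x ≠ y) :
    k (fdiam d Finset.univ) * m y ≤ ultraLap d k m x y := by
  rw [ultraLap_apply_of_ne d k m hxy.symm]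
  exact mul_le_mul_of_nonneg_right
    (hk _ _ (hd x y) (le_fdiam d (Finset.mem_univ x) (Finset.mem_univ y))) (hm y)

end UltraLaplacian

theorem stmt17_general {X : Type*} [Fintype X] [DecidableEq X]
    (d : X → X → ℝ)
    (hd0 : ∀ x y, d x y = 0 ↔ x = y)
    (hsymm : ∀ x y, d x y = d y x)
    (hultra : ∀ x y z, d x z ≤ max (d x y) (d y z))
    (m : X → ℝ) (hm : ∀ x, 0 < m x) (k : ℝ → ℝ)
    (hk : ∀ a b, 0 ≤ a → a ≤ b → k b ≤ k a)
    (hgap : 0 < k (fdiam d Finset.univ))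
    (hprob : ∑ x, m x = 1) :
    (∀ (u : X → ℝ) (x : X),
        Filter.Tendsto
          (fun t : ℝ => ∑ y, (NormedSpace.exp (t • ultraLap d k m)) x y * u y)
          Filter.atTop (nhds (∑ y, u y * m y))) ∧
    (∀ x y : X,
        Filter.Tendsto
          (fun t : ℝ => (NormedSpace.exp (t • ultraLap d k m)) x y)
          Filter.atTop (nhds (m y))) := by
  have hd : ∀ x y, 0 ≤ d x y := nonneg_of_ultrametric (fun x => (hd0 x x).2 rfl) hsymm hultra
  have hentry : ∀ x y : X,
      Tendsto (fun t : ℝ => exp (t • ultraLap d k m) x y) atTop (𝓝 (m y)) :=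
    tendsto_exp_smul_apply (ultraLap_mulVec_one d k m) (vecMul_ultraLap_eq_zero d k m hsymm) hprob
      hgap fun x y hxy => le_ultraLap_apply_of_ne d k m hd (fun x => (hm x).le) hk hxy
  refine ⟨fun u x => ?_, hentry⟩
  simpa [mul_comm] using tendsto_finsetSum Finset.univ fun y _ => (hentry x y).mul_const (u y)

/-- Ergodicity: if `k` is nonincreasing on `[0,∞)`,
`k(diam X) > 0` and `m` is a probability weight, then `(exp(tL)u)(x) → Σ_y u(y)·m(y)`
as `t → ∞`; in particular `(exp(tL))_{x,y} → m(y)`. -/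
theorem stmt17 {X : Type*} [Fintype X] [DecidableEq X]
    (hX : 1 < Fintype.card X)
    (d : X → X → ℝ)
    (hd0 : ∀ x y, d x y = 0 ↔ x = y)
    (hsymm : ∀ x y, d x y = d y x)
    (hultra : ∀ x y z, d x z ≤ max (d x y) (d y z))
    (m : X → ℝ) (hm : ∀ x, 0 < m x) (k : ℝ → ℝ)
    (hk : ∀ a b, 0 ≤ a → a ≤ b → k b ≤ k a)
    (hgap : 0 < k (fdiam d Finset.univ))
    (hprob : ∑ x, m x = 1) :
    (∀ (u : X → ℝ) (x : X),
        Filter.Tendsto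
          (fun t : ℝ => ∑ y, (NormedSpace.exp (t • ultraLap d k m)) x y * u y)
          Filter.atTop (nhds (∑ y, u y * m y))) ∧
    (∀ x y : X,
        Filter.Tendsto
          (fun t : ℝ => (NormedSpace.exp (t • ultraLap d k m)) x y)
          Filter.atTop (nhds (m y))) :=
  stmt17_general d hd0 hsymm hultra m hm k hk hgap hprob
end
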